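/- Maurey net size growth within the chaining: with δᵢ = δ/2ⁱ, r₂ = Kδ/L₂, and Nᵢ the product net from a (δᵢ/(L₁L₂))-net of B₂ᵏ(r₁) and a Maurey (δᵢ/L₂)-net of B₁ᵖ(r₂), we have log|Nᵢ| ≤ 4ⁱ·K²·log(2p+1) + k·(log(4L₁L₂r₁/δ) + i); hence if m ≥ K²·log(2p+1) + k·log(4L₁L₂r₁/δ) and i ≥ 1 with k·i ≤ k·log(4L₁L₂r₁/δ)·i, then log|Nᵢ| ≤ 2·4ⁱ·m. -/

import Mathlib

open scoped NNReal

noncomputable def coveringNumber {α : Type*} [PseudoMetricSpace α] (δ : ℝ) (T : Set α) : ℕ∞ :=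
  ⨅ (S : Finset α) (_ : ↑S ⊆ T ∧ ∀ x ∈ T, ∃ y ∈ S, dist x y ≤ δ), (S.card : ℕ∞)

def l1Ball (d : ℕ) (r : ℝ) : Set (EuclideanSpace ℝ (Fin d)) := {x | ∑ i, |x i| ≤ r}

/-!
The Euclidean factor is the volumetric bound: a maximal `ε`-separated subset of a ball of
radius `r` in a `d`-dimensional space is an `ε`-net, and the disjoint balls of radius `ε / 2`
around its points fit in the ball of radius `r + ε / 2`, so it has at most `(1 + 2r/ε)ᵈ` points.

The `ℓ¹` factor is Maurey's empirical method: every `x ∈ B₁ᵖ(r)` is a convex combination of the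
`2p + 1` points `0, ±r eⱼ`, and some average of `s` of these points is within
`√((r² - ‖x‖²)/s)` of `x`. Hence the `(2p + 1)ˢ` such averages form an `η`-net once
`r² ≤ (s + 1) η²`; at scale `i` this allows `s = ⌊4ⁱK²⌋`. The final bound uses
`log (4L₁L₂r₁/δ) ≥ 1`.
-/

open Finset MeasureTheory Module
open scoped ENNReal

lemma coveringNumber_le_card {α : Type*} [PseudoMetricSpace α] {δ : ℝ} {T : Set α}
    (S : Finset α) (hST : ↑S ⊆ T) (hS : ∀ x ∈ T, ∃ y ∈ S, dist x y ≤ δ) :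
    coveringNumber δ T ≤ S.card :=
  iInf₂_le S ⟨hST, hS⟩

lemma coveringNumber_le_metric_coveringNumber {α : Type*} [PseudoMetricSpace α] (ε : ℝ≥0)
    (T : Set α) : coveringNumber ε T ≤ Metric.coveringNumber ε T := by
  by_cases htop : Metric.coveringNumber ε T = ⊤
  · simp [htop]
  obtain ⟨C, hCT, hCfin, hcover, hcard⟩ := Metric.exists_set_encard_eq_coveringNumber htop
  rw [← hcard, hCfin.encard_eq_coe_toFinset_card]
  refine coveringNumber_le_card _ (by simpa using hCT) fun x hx => ?_
  obtain ⟨y, hyC, hxy⟩ := hcover hx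
  exact ⟨y, hCfin.mem_toFinset.2 hyC, by simpa [edist_dist] using hxy⟩

section Volumetric

variable {E : Type*} [NormedAddCommGroup E] [NormedSpace ℝ E] [FiniteDimensional ℝ E]
  [MeasurableSpace E] [BorelSpace E]

lemma Finset.card_le_of_isSeparated_of_subset_closedBall {P : Finset E} {x : E} {r : ℝ}
    {ε : ℝ≥0} (hr : 0 ≤ r) (hε : 0 < ε) (hP : ↑P ⊆ Metric.closedBall x r)
    (hsep : Metric.IsSeparated ε (P : Set E)) :
    (P.card : ℝ) ≤ (1 + 2 * r / ε) ^ finrank ℝ E := by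
  set μ : Measure E := Measure.addHaar
  set d := finrank ℝ E
  have hε' : (0 : ℝ) < ε := hε
  have hdisj : (P : Set E).PairwiseDisjoint fun y => Metric.closedBall y (ε / 2) :=
    fun y hy z hz hyz => Metric.closedBall_disjoint_closedBall <| by
      have : (ε : ℝ≥0∞) < edist y z := hsep hy hz hyz
      rw [edist_dist, ENNReal.coe_lt_ofReal] at this
      linarith
  have hunion : (⋃ y ∈ P, Metric.closedBall y (ε / 2)) ⊆ Metric.closedBall x (r + ε / 2) := by
    refine Set.iUnion₂_subset fun y hy => Metric.closedBall_subset_closedBall' ?_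
    have := Metric.mem_closedBall.1 (hP hy)
    linarith
  have hvol : (P.card : ℝ) * ((ε / 2) ^ d * μ.real (Metric.closedBall 0 1)) ≤
      (r + ε / 2) ^ d * μ.real (Metric.closedBall 0 1) := by
    calc (P.card : ℝ) * ((ε / 2) ^ d * μ.real (Metric.closedBall 0 1))
        = μ.real (⋃ y ∈ P, Metric.closedBall y (ε / 2)) := by
          rw [measureReal_biUnion_finset hdisj (fun _ _ => Metric.isClosed_closedBall.measurableSet)
              fun _ _ => measure_closedBall_lt_top.ne,
            Finset.sum_congr rfl fun y _ => Measure.addHaar_real_closedBall' μ y (by positivity),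
            Finset.sum_const, nsmul_eq_mul]
      _ ≤ μ.real (Metric.closedBall x (r + ε / 2)) :=
          measureReal_mono hunion measure_closedBall_lt_top.ne
      _ = (r + ε / 2) ^ d * μ.real (Metric.closedBall 0 1) :=
          Measure.addHaar_real_closedBall' μ x (by positivity)
  have hball : 0 < μ.real (Metric.closedBall (0 : E) 1) :=
    ENNReal.toReal_pos (Metric.measure_closedBall_pos μ 0 one_pos).ne' measure_closedBall_lt_top.ne
  rw [← mul_assoc, mul_le_mul_iff_left₀ hball, ← le_div_iff₀ (by positivity), ← div_pow] at hvol
  refine hvol.trans_eq (congrArg (· ^ d) ?_)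
  field_simp
  ring

lemma encard_le_of_isSeparated_of_subset_closedBall {C : Set E} {x : E} {r : ℝ} {ε : ℝ≥0}
    (hr : 0 ≤ r) (hε : 0 < ε) (hC : C ⊆ Metric.closedBall x r) (hsep : Metric.IsSeparated ε C) :
    C.encard ≤ ⌊(1 + 2 * r / ε) ^ finrank ℝ E⌋₊ := by
  by_contra! h
  obtain ⟨t, htC, htcard⟩ := Set.exists_subset_encard_eq (Order.add_one_le_of_lt h)
  have htfin : t.Finite := Set.finite_of_encard_eq_coe htcard
  have hcard := Finset.card_le_of_isSeparated_of_subset_closedBall (P := htfin.toFinset) hr hε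
    (by simpa using htC.trans hC) (by simpa using hsep.subset htC)
  rw [htfin.encard_eq_coe_toFinset_card] at htcard
  have : htfin.toFinset.card = ⌊(1 + 2 * r / ε) ^ finrank ℝ E⌋₊ + 1 := by exact_mod_cast htcard
  rw [this] at hcard
  push_cast at hcard
  linarith [Nat.lt_floor_add_one ((1 + 2 * r / ε) ^ finrank ℝ E)]

theorem coveringNumber_closedBall_le (x : E) {r ε : ℝ} (hr : 0 ≤ r) (hε : 0 < ε) :
    coveringNumber ε (Metric.closedBall x r) ≤ ⌊(1 + 2 * r / ε) ^ finrank ℝ E⌋₊ := by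
  have hε' : ((ε.toNNReal : ℝ≥0) : ℝ) = ε := Real.coe_toNNReal ε hε.le
  calc coveringNumber ε (Metric.closedBall x r)
      ≤ Metric.coveringNumber ε.toNNReal (Metric.closedBall x r) := by
        simpa only [hε'] using coveringNumber_le_metric_coveringNumber ε.toNNReal _
    _ ≤ Metric.packingNumber ε.toNNReal (Metric.closedBall x r) :=
        Metric.coveringNumber_le_packingNumber _ _
    _ ≤ ⌊(1 + 2 * r / ε) ^ finrank ℝ E⌋₊ := by
        refine iSup₂_le fun C hC => iSup_le fun hsep => ?_
        simpa only [hε'] using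
          encard_le_of_isSeparated_of_subset_closedBall hr (Real.toNNReal_pos.2 hε) hC hsep

end Volumetric

section Maurey

variable {E Ω : Type*} [NormedAddCommGroup E] [InnerProductSpace ℝ E] [Fintype Ω]
  {q : Ω → ℝ} {Z : Ω → E} {x : E}

lemma exists_le_sum_mul (hq₀ : ∀ ω, 0 ≤ q ω) (hq₁ : ∑ ω, q ω = 1) (g : Ω → ℝ) :
    ∃ ω, g ω ≤ ∑ ω, q ω * g ω := by
  obtain ⟨ω, -, hω⟩ := (concaveOn_id convex_univ).exists_le_of_centerMass (t := univ)
    (fun ω _ => hq₀ ω) (by simp [hq₁]) fun ω _ => Set.mem_univ (g ω)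
  exact ⟨ω, by simpa [Finset.centerMass, hq₁] using hω⟩

lemma sum_mul_norm_add_sub_sq (hq₁ : ∑ ω, q ω = 1) (hx : ∑ ω, q ω • Z ω = x) (v : E) :
    ∑ ω, q ω * ‖v + (Z ω - x)‖ ^ 2 = ‖v‖ ^ 2 + ∑ ω, q ω * ‖Z ω - x‖ ^ 2 := by
  have hcentered : ∑ ω, q ω • (Z ω - x) = 0 := by
    simp only [smul_sub, sum_sub_distrib, hx, ← sum_smul, hq₁, one_smul, sub_self]
  have hcross : ∑ ω, q ω * (2 * inner ℝ v (Z ω - x)) = 0 := calc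
    _ = 2 * inner ℝ v (∑ ω, q ω • (Z ω - x)) := by
      rw [inner_sum, mul_sum]
      exact sum_congr rfl fun ω _ => by rw [real_inner_smul_right]; ring
    _ = 0 := by rw [hcentered, inner_zero_right, mul_zero]
  simp_rw [norm_add_sq_real, mul_add, sum_add_distrib, ← sum_mul, hq₁, hcross]
  ring

lemma sum_mul_norm_sub_sq_le (hq₀ : ∀ ω, 0 ≤ q ω) (hq₁ : ∑ ω, q ω = 1)
    (hx : ∑ ω, q ω • Z ω = x) {R : ℝ} (hZ : ∀ ω, ‖Z ω‖ ≤ R) :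
    ∑ ω, q ω * ‖Z ω - x‖ ^ 2 ≤ R ^ 2 - ‖x‖ ^ 2 := by
  have h := sum_mul_norm_add_sub_sq hq₁ hx x
  simp only [add_sub_cancel] at h
  have : ∑ ω, q ω * ‖Z ω‖ ^ 2 ≤ R ^ 2 := calc
    ∑ ω, q ω * ‖Z ω‖ ^ 2 ≤ ∑ ω, q ω * R ^ 2 := by
      gcongr with ω
      · exact hq₀ ω
      · exact hZ ω
    _ = R ^ 2 := by rw [← sum_mul, hq₁, one_mul]
  linarith

-- Maurey's empirical method, derandomized: pick the indices one at a time, each no worse than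
-- the `q`-average, which by `sum_mul_norm_add_sub_sq` adds exactly the variance to the error.
lemma exists_norm_sum_sub_nsmul_sq_le (hq₀ : ∀ ω, 0 ≤ q ω) (hq₁ : ∑ ω, q ω = 1)
    (hx : ∑ ω, q ω • Z ω = x) (s : ℕ) :
    ∃ f : Fin s → Ω, ‖∑ j, Z (f j) - s • x‖ ^ 2 ≤ s * ∑ ω, q ω * ‖Z ω - x‖ ^ 2 := by
  induction s with
  | zero => exact ⟨Fin.elim0, by simp⟩
  | succ s ih =>
    obtain ⟨f, hf⟩ := ih
    obtain ⟨ω, hω⟩ := exists_le_sum_mul hq₀ hq₁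
      fun ω => ‖(∑ j, Z (f j) - s • x) + (Z ω - x)‖ ^ 2
    let f' : Fin (s + 1) → Ω := Fin.snoc f ω
    have hsum : ∑ j, Z (f' j) - (s + 1) • x = (∑ j, Z (f j) - s • x) + (Z ω - x) := by
      simp only [f', Fin.sum_univ_castSucc, Fin.snoc_castSucc, Fin.snoc_last, add_smul, one_smul]
      abel
    rw [sum_mul_norm_add_sub_sq hq₁ hx] at hω
    refine ⟨f', ?_⟩
    rw [hsum, Nat.cast_succ]
    linarith

lemma exists_mul_dist_average_sq_le (hq₀ : ∀ ω, 0 ≤ q ω) (hq₁ : ∑ ω, q ω = 1)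
    (hx : ∑ ω, q ω • Z ω = x) {R : ℝ} (hZ : ∀ ω, ‖Z ω‖ ≤ R) {s : ℕ} (hs : s ≠ 0) :
    ∃ f : Fin s → Ω, s * dist ((s : ℝ)⁻¹ • ∑ j, Z (f j)) x ^ 2 ≤ R ^ 2 - ‖x‖ ^ 2 := by
  obtain ⟨f, hf⟩ := exists_norm_sum_sub_nsmul_sq_le hq₀ hq₁ hx s
  refine ⟨f, ?_⟩
  have hs' : (0 : ℝ) < s := by positivity
  have hdist : dist ((s : ℝ)⁻¹ • ∑ j, Z (f j)) x = (s : ℝ)⁻¹ * ‖∑ j, Z (f j) - s • x‖ := by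
    rw [dist_eq_norm, ← norm_smul_of_nonneg (by positivity), smul_sub, ← Nat.cast_smul_eq_nsmul ℝ,
      inv_smul_smul₀ hs'.ne']
  calc (s : ℝ) * dist ((s : ℝ)⁻¹ • ∑ j, Z (f j)) x ^ 2
      = (s : ℝ)⁻¹ * ‖∑ j, Z (f j) - s • x‖ ^ 2 := by
        rw [hdist]
        field_simp
    _ ≤ ∑ ω, q ω * ‖Z ω - x‖ ^ 2 := by
        rw [inv_mul_le_iff₀ hs']
        exact hf
    _ ≤ R ^ 2 - ‖x‖ ^ 2 := sum_mul_norm_sub_sq_le hq₀ hq₁ hx hZ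

end Maurey

lemma convex_l1Ball (p : ℕ) (r : ℝ) : Convex ℝ (l1Ball p r) := by
  intro x hx y hy a b ha hb hab
  calc ∑ i, |(a • x + b • y) i| ≤ ∑ i, (a * |x i| + b * |y i|) := by
        gcongr with i
        simpa [abs_mul, abs_of_nonneg ha, abs_of_nonneg hb] using abs_add_le (a * x i) (b * y i)
    _ = a * ∑ i, |x i| + b * ∑ i, |y i| := by rw [sum_add_distrib, mul_sum, mul_sum]
    _ ≤ a * r + b * r := by gcongr <;> assumption
    _ = r := by rw [← add_mul, hab, one_mul]

/-- The `2p + 1` points `0, ±r eⱼ`, whose convex hull is `l1Ball p r`. -/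
noncomputable def l1Vertex (p : ℕ) (r : ℝ) : Option (Fin p × Bool) → EuclideanSpace ℝ (Fin p)
  | none => 0
  | some (j, b) => EuclideanSpace.single j (if b then r else -r)

lemma l1Vertex_mem_l1Ball {p : ℕ} {r : ℝ} (hr : 0 ≤ r) (ω : Option (Fin p × Bool)) :
    l1Vertex p r ω ∈ l1Ball p r := by
  rcases ω with _ | ⟨j, _ | _⟩ <;>
    simp [l1Vertex, l1Ball, PiLp.single_apply, apply_ite, abs_of_nonneg hr, hr]

lemma norm_l1Vertex_le {p : ℕ} {r : ℝ} (hr : 0 ≤ r) (ω : Option (Fin p × Bool)) :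
    ‖l1Vertex p r ω‖ ≤ r := by
  rcases ω with _ | ⟨j, _ | _⟩ <;> simp [l1Vertex, abs_of_nonneg hr, hr]

lemma exists_sum_smul_l1Vertex_eq {p : ℕ} {r : ℝ} (hr : 0 < r) {x : EuclideanSpace ℝ (Fin p)}
    (hx : x ∈ l1Ball p r) :
    ∃ q : Option (Fin p × Bool) → ℝ, (∀ ω, 0 ≤ q ω) ∧ ∑ ω, q ω = 1 ∧
      ∑ ω, q ω • l1Vertex p r ω = x := by
  let q : Option (Fin p × Bool) → ℝ
    | none => 1 - (∑ i, |x i|) / r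
    | some (j, true) => (x j)⁺ / r
    | some (j, false) => (x j)⁻ / r
  refine ⟨q, ?_, ?_, ?_⟩
  · rintro (_ | ⟨j, _ | _⟩)
    · have hx' : ∑ i, |x i| ≤ r := hx
      simpa [q, div_le_one hr] using hx'
    · simp only [q]; positivity
    · simp only [q]; positivity
  · simp [q, Fintype.sum_option, Fintype.sum_prod_type, ← add_div, posPart_add_negPart, ← sum_div]
  · ext i
    simp [q, Fintype.sum_option, Fintype.sum_prod_type, l1Vertex, Pi.single_apply, hr.ne',
      sum_add_distrib, ← sub_eq_add_neg, posPart_sub_negPart]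

-- Points of norm at most `η` are covered by `0`; for the others, Maurey's bound
-- `s ‖avg - x‖² ≤ r² - ‖x‖² ≤ r² - η² ≤ s η²` applies.
theorem coveringNumber_l1Ball_le (p : ℕ) {r η : ℝ} (hr : 0 < r) (hη : 0 < η) {s : ℕ}
    (hs : s ≠ 0) (hrs : r ^ 2 ≤ (s + 1) * η ^ 2) :
    coveringNumber η (l1Ball p r) ≤ ((2 * p + 1) ^ s : ℕ) := by
  classical
  let avg : (Fin s → Option (Fin p × Bool)) → EuclideanSpace ℝ (Fin p) :=
    fun f => (s : ℝ)⁻¹ • ∑ j, l1Vertex p r (f j)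
  have hs' : (0 : ℝ) < s := by positivity
  have havg : ∀ f, avg f ∈ l1Ball p r := fun f => by
    simp only [avg, smul_sum]
    refine (convex_l1Ball p r).sum_mem (fun _ _ => by positivity) ?_
      fun j _ => l1Vertex_mem_l1Ball hr.le (f j)
    simp [hs'.ne']
  have hnet : ∀ x ∈ l1Ball p r, ∃ y ∈ univ.image avg, dist x y ≤ η := by
    intro x hx
    rcases le_or_gt ‖x‖ η with hsmall | hlarge
    · exact ⟨avg fun _ => none, mem_image_of_mem _ (mem_univ _), by simpa [avg, l1Vertex]⟩
    obtain ⟨q, hq₀, hq₁, hqx⟩ := exists_sum_smul_l1Vertex_eq hr hx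
    obtain ⟨f, hf⟩ :=
      exists_mul_dist_average_sq_le hq₀ hq₁ hqx (norm_l1Vertex_le hr.le) hs
    refine ⟨avg f, mem_image_of_mem _ (mem_univ _), ?_⟩
    rw [dist_comm, ← pow_le_pow_iff_left₀ dist_nonneg hη.le two_ne_zero,
      ← mul_le_mul_iff_right₀ hs']
    nlinarith
  calc coveringNumber η (l1Ball p r) ≤ (univ.image avg).card :=
        coveringNumber_le_card _ (by simpa [Set.subset_def] using havg) hnet
    _ ≤ (2 * p + 1) ^ s := by
        exact_mod_cast card_image_le.trans (by simp [add_comm, mul_comm])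

theorem coveringNumber_l1Ball_div_le (p : ℕ) {r a : ℝ} (hr : 0 < r) (ha : 1 ≤ a) :
    coveringNumber (r / a) (l1Ball p r) ≤ ((2 * p + 1) ^ ⌊a ^ 2⌋₊ : ℕ) := by
  have ha₀ : 0 < a := one_pos.trans_le ha
  refine coveringNumber_l1Ball_le p hr (by positivity)
    (Nat.floor_pos.2 (one_le_pow₀ ha)).ne' ?_
  calc r ^ 2 = a ^ 2 * (r / a) ^ 2 := by field_simp
    _ ≤ (⌊a ^ 2⌋₊ + 1) * (r / a) ^ 2 := by gcongr; exact (Nat.lt_floor_add_one _).le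

lemma log_toNat_mul_le {a b : ℕ∞} {m n : ℕ} (ha : a ≤ m) (hb : b ≤ n) :
    Real.log (a * b).toNat ≤ Real.log m + Real.log n := by
  have ha' : a.toNat ≤ m := by simpa using ENat.toNat_le_toNat ha (ENat.natCast_ne_top m)
  have hb' : b.toNat ≤ n := by simpa using ENat.toNat_le_toNat hb (ENat.natCast_ne_top n)
  rw [ENat.toNat_mul, Nat.cast_mul]
  rcases eq_or_ne a.toNat 0 with ha0 | ha0
  · simpa [ha0] using add_nonneg (Real.log_natCast_nonneg m) (Real.log_natCast_nonneg n)
  rcases eq_or_ne b.toNat 0 with hb0 | hb0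
  · simpa [hb0] using add_nonneg (Real.log_natCast_nonneg m) (Real.log_natCast_nonneg n)
  rw [Real.log_mul (by positivity) (by positivity)]
  gcongr

lemma log_floor_one_add_two_mul_pow_le {ρ : ℝ} (hρ : 1 ≤ ρ) (i k : ℕ) :
    Real.log ⌊(1 + 2 * (ρ * 2 ^ i)) ^ k⌋₊ ≤ k * (Real.log (4 * ρ) + i) := by
  have h2i : (1 : ℝ) ≤ 2 ^ i := one_le_pow₀ one_le_two
  have hbase : 1 ≤ 1 + 2 * (ρ * 2 ^ i) := by nlinarith
  calc Real.log ⌊(1 + 2 * (ρ * 2 ^ i)) ^ k⌋₊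
      ≤ Real.log ((1 + 2 * (ρ * 2 ^ i)) ^ k) :=
        Real.log_le_log (by exact_mod_cast Nat.floor_pos.2 (one_le_pow₀ hbase))
          (Nat.floor_le (by positivity))
    _ ≤ k * Real.log (4 * ρ * 2 ^ i) := by
        rw [Real.log_pow]
        gcongr
        nlinarith
    _ = k * (Real.log (4 * ρ) + i * Real.log 2) := by
        rw [Real.log_mul (by positivity) (by positivity), Real.log_pow]
    _ ≤ k * (Real.log (4 * ρ) + i) := by
        gcongr
        exact mul_le_of_le_one_right i.cast_nonneg (by linarith [Real.log_two_lt_d9])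

lemma log_pow_floor_le (n : ℕ) {t : ℝ} (ht : 0 ≤ t) :
    Real.log (n ^ ⌊t⌋₊ : ℕ) ≤ t * Real.log n := by
  rw [Nat.cast_pow, Real.log_pow]
  exact mul_le_mul_of_nonneg_right (Nat.floor_le ht) (Real.log_natCast_nonneg n)

lemma one_le_log_four_mul {ρ : ℝ} (hρ : 1 ≤ ρ) : 1 ≤ Real.log (4 * ρ) := by
  rw [Real.le_log_iff_exp_le (by positivity)]
  linarith [Real.exp_one_lt_d9]

lemma four_pow_mul_add_le (i : ℕ) {A k R : ℝ} (hA : 0 ≤ A) (hk : 0 ≤ k) (hR : 1 ≤ R) :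
    4 ^ i * A + k * (R + i) ≤ 2 * 4 ^ i * (A + k * R) := by
  have hi : (i : ℝ) + 1 ≤ 2 * 4 ^ i := by
    have : (i + 1 : ℝ) ≤ 2 ^ i := by exact_mod_cast Nat.lt_two_pow_self
    linarith [pow_le_pow_left₀ zero_le_two (by norm_num : (2 : ℝ) ≤ 4) i]
  have hkR : k * (R + i) ≤ 2 * 4 ^ i * (k * R) := calc
    k * (R + i) ≤ k * (R * (i + 1)) := by gcongr; nlinarith
    _ ≤ k * (R * (2 * 4 ^ i)) := by gcongr
    _ = 2 * 4 ^ i * (k * R) := by ring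
  nlinarith [mul_nonneg (pow_nonneg (by norm_num : (0 : ℝ) ≤ 4) i) hA]

theorem maurey_net_growth_general {k p : ℕ} (L₁ L₂ r₁ δ K m : ℝ)
    (hL₁ : 0 < L₁) (hL₂ : 0 < L₂) (hr₁ : 0 < r₁) (hδ : 0 < δ) (hK : 1 ≤ K)
    (hδr : δ ≤ L₁ * L₂ * r₁) (r₂ : ℝ) (hr₂ : r₂ = K * δ / L₂)
    (hm : K ^ 2 * Real.log (2 * p + 1) + k * Real.log (4 * L₁ * L₂ * r₁ / δ) ≤ m)
    (i : ℕ)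
    (N : ℕ∞)
    (hN : N = coveringNumber (δ / 2 ^ i / (L₁ * L₂))
          (Metric.closedBall (0 : EuclideanSpace ℝ (Fin k)) r₁) *
        coveringNumber (δ / 2 ^ i / L₂) (l1Ball p r₂)) :
    N ≠ ⊤ ∧
      Real.log N.toNat ≤
        4 ^ i * K ^ 2 * Real.log (2 * p + 1) +
          k * (Real.log (4 * L₁ * L₂ * r₁ / δ) + i) ∧
      Real.log N.toNat ≤ 2 * 4 ^ i * m := by
  set ρ := L₁ * L₂ * r₁ / δ
  have hρ : 1 ≤ ρ := (one_le_div hδ).2 hδr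
  have hR : 4 * L₁ * L₂ * r₁ / δ = 4 * ρ := by simp only [ρ]; ring
  have hcov₁ := coveringNumber_closedBall_le (0 : EuclideanSpace ℝ (Fin k)) hr₁.le
    (by positivity : 0 < δ / 2 ^ i / (L₁ * L₂))
  rw [finrank_euclideanSpace_fin, show 2 * r₁ / (δ / 2 ^ i / (L₁ * L₂)) = 2 * (ρ * 2 ^ i) by
    simp only [ρ]; field_simp] at hcov₁
  have hcov₂ := coveringNumber_l1Ball_div_le p (r := r₂) (by rw [hr₂]; positivity)
    (one_le_mul_of_one_le_of_one_le hK (one_le_pow₀ one_le_two) : 1 ≤ K * 2 ^ i)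
  rw [show r₂ / (K * 2 ^ i) = δ / 2 ^ i / L₂ by rw [hr₂]; field_simp, show (K * 2 ^ i) ^ 2 =
    4 ^ i * K ^ 2 by rw [mul_pow, ← pow_mul, pow_mul']; norm_num; ring] at hcov₂
  have hbound : Real.log N.toNat ≤
      4 ^ i * K ^ 2 * Real.log (2 * p + 1) + k * (Real.log (4 * ρ) + i) := by
    rw [hN, add_comm]
    refine (log_toNat_mul_le hcov₁ hcov₂).trans (add_le_add
      (log_floor_one_add_two_mul_pow_le hρ i k) ?_)
    exact_mod_cast log_pow_floor_le (2 * p + 1) (by positivity)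
  refine ⟨hN ▸ WithTop.mul_ne_top (ne_top_of_le_ne_top (ENat.natCast_ne_top _) hcov₁)
    (ne_top_of_le_ne_top (ENat.natCast_ne_top _) hcov₂), hR ▸ hbound, ?_⟩
  rw [hR] at hm
  calc Real.log N.toNat ≤ _ := hbound
    _ ≤ 2 * 4 ^ i * (K ^ 2 * Real.log (2 * p + 1) + k * Real.log (4 * ρ)) := by
      rw [mul_assoc (4 ^ i)]
      refine four_pow_mul_add_le i (mul_nonneg (sq_nonneg K) (Real.log_nonneg ?_)) k.cast_nonneg
        (one_le_log_four_mul hρ)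
      linarith [p.cast_nonneg (α := ℝ)]
    _ ≤ 2 * 4 ^ i * m := by gcongr

/-- Net size growth in the chaining: with `δᵢ = δ/2ⁱ`, `r₂ = Kδ/L₂`, and `Nᵢ` the product of a
`(δᵢ/(L₁L₂))`-net of `B₂ᵏ(r₁)` and a Maurey `(δᵢ/L₂)`-net of `B₁ᵖ(r₂)`,
`log|Nᵢ| ≤ 4ⁱK²log(2p+1) + k(log(4L₁L₂r₁/δ) + i)`; hence if
`m ≥ K²log(2p+1) + k·log(4L₁L₂r₁/δ)` and `i ≥ 1`, then `log|Nᵢ| ≤ 2·4ⁱ·m`. -/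
theorem maurey_net_growth {k p : ℕ} (L₁ L₂ r₁ δ K m : ℝ)
    (hL₁ : 0 < L₁) (hL₂ : 0 < L₂) (hr₁ : 0 < r₁) (hδ : 0 < δ) (hK : 1 ≤ K)
    (hδr : δ ≤ L₁ * L₂ * r₁) (r₂ : ℝ) (hr₂ : r₂ = K * δ / L₂)
    (hm : K ^ 2 * Real.log (2 * p + 1) + k * Real.log (4 * L₁ * L₂ * r₁ / δ) ≤ m)
    (i : ℕ) (hi : 1 ≤ i)
    (N : ℕ∞)
    (hN : N = coveringNumber (δ / 2 ^ i / (L₁ * L₂))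
          (Metric.closedBall (0 : EuclideanSpace ℝ (Fin k)) r₁) *
        coveringNumber (δ / 2 ^ i / L₂) (l1Ball p r₂)) :
    N ≠ ⊤ ∧
      Real.log N.toNat ≤
        4 ^ i * K ^ 2 * Real.log (2 * p + 1) +
          k * (Real.log (4 * L₁ * L₂ * r₁ / δ) + i) ∧
      Real.log N.toNat ≤ 2 * 4 ^ i * m :=
  maurey_net_growth_general L₁ L₂ r₁ δ K m hL₁ hL₂ hr₁ hδ hK hδr r₂ hr₂ hm i N hN
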